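/- Let P ⊆ nA* be a finite joinless code and set k_i = max{|v_i| : (v_1,…,v_n) ∈ P} for each i ∈ {1,…,n}. Then P is maximal as a joinless code if and only if P can be transformed into the box code A^{k_1} × … × A^{k_n} by a finite sequence of one-step restrictions. -/

import Mathlib

namespace BrinThompson

abbrev W (A : Type*) (n : ℕ) : Type _ := Fin n → List A

variable {A : Type*} {n : ℕ}

/-- Coordinatewise concatenation in `nA*`. -/
def cat (u x : W A n) : W A n := fun i => u i ++ x i

/-- `u ≤_init v` : `u` is an initial factor of `v`. -/
def initLE (u v : W A n) : Prop := ∃ x : W A n, v = cat u x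

/-- `w` is the join (least upper bound) of `u` and `v` w.r.t. `≤_init`. -/
def isJoin (u v w : W A n) : Prop :=
  initLE u w ∧ initLE v w ∧ ∀ z : W A n, initLE u z → initLE v z → initLE w z

/-- `u` and `v` have a join. -/
def HasJoin (u v : W A n) : Prop := ∃ w : W A n, isJoin u v w

/-- A joinless code: no two distinct elements have a join. -/
def JoinlessCode (S : Set (W A n)) : Prop :=
  ∀ u ∈ S, ∀ v ∈ S, u ≠ v → ¬ HasJoin u v

/-- A maximal joinless code: joinless, and every element of `nA*` has a join
with some element of the code. -/
def MaxJoinlessCode (S : Set (W A n)) : Prop :=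
  JoinlessCode S ∧ ∀ x : W A n, ∃ p ∈ S, HasJoin x p

/-- The right ideal `C · nA*` generated by `C`. -/
def genIdeal (C : Set (W A n)) : Set (W A n) := {w | ∃ c ∈ C, ∃ x : W A n, w = cat c x}

def IsRightIdeal (R : Set (W A n)) : Prop := genIdeal R = R

/-- An initial factor code: pairwise `≤_init`-incomparable set. -/
def InitFactorCode (S : Set (W A n)) : Prop :=
  ∀ u ∈ S, ∀ v ∈ S, initLE u v → u = v

/-- `A_{ε,n}`: tuples with one coordinate a single letter and the rest empty. -/
def Aeps (A : Type*) (n : ℕ) : Set (W A n) :=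
  {w | ∃ i : Fin n, ∃ a : A, w i = [a] ∧ ∀ j : Fin n, j ≠ i → w j = []}

/-- `(ε)^n`, the tuple of empty strings. -/
def epsn (A : Type*) (n : ℕ) : W A n := fun _ => []

/-- `nA^ω`: `n`-tuples of one-sided infinite sequences over `A`. -/
abbrev Winf (A : Type*) (n : ℕ) : Type _ := Fin n → ℕ → A

/-- Concatenation of a finite tuple `p ∈ nA*` with an infinite tuple `u ∈ nA^ω`. -/
def catInf (p : W A n) (u : Winf A n) : Winf A n :=
  fun i k => if h : k < (p i).length then (p i).get ⟨k, h⟩ else u i (k - (p i).length)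

/-- `v` is an interior vertex of the `P`-dag: a strict initial factor of
some element of `P`. -/
def Interior (P : Set (W A n)) (v : W A n) : Prop := ∃ p ∈ P, initLE v p ∧ v ≠ p

/-- The child of `v` in direction `i`, extended by letter `a`. -/
def child (v : W A n) (i : Fin n) (a : A) : W A n := Function.update v i (v i ++ [a])

/-- A leaf of the interior dag of `P`: an interior vertex none of whose
children is interior. -/
def InteriorLeaf (P : Set (W A n)) (v : W A n) : Prop :=
  Interior P v ∧ ∀ (i : Fin n) (a : A), ¬ Interior P (child v i a)

/-- `v_+ = (v · A_{ε,n}) ∩ P`, the set of children of `v` belonging to `P`. -/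
def vplus (P : Set (W A n)) (v : W A n) : Set (W A n) :=
  {w | (∃ (i : Fin n) (a : A), w = child v i a) ∧ w ∈ P}

/-- The depth of a vertex: the sum of the coordinate lengths. -/
def depth (v : W A n) : ℕ := ∑ i, (v i).length

/-- One-step restriction of `P` at `(p, i)`. -/
def oneStep (P : Set (W A n)) (p : W A n) (i : Fin n) : Set (W A n) :=
  (P \ {p}) ∪ {w | ∃ a : A, w = child p i a}

/-- One step in a sequence of one-step restrictions. -/
def RestrStep (P Q : Set (W A n)) : Prop := ∃ p ∈ P, ∃ i : Fin n, Q = oneStep P p i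

/-- The box code `A^{k_1} × … × A^{k_n}`. -/
def box (A : Type*) {n : ℕ} (k : Fin n → ℕ) : Set (W A n) :=
  {w | ∀ i : Fin n, (w i).length = k i}

/-- Elementwise join `P ∨ Q` of two sets, ranging over the joins that exist. -/
def setJoin (P Q : Set (W A n)) : Set (W A n) :=
  {w | ∃ p ∈ P, ∃ q ∈ Q, isJoin p q w}

/-- `ℓ(S)`: the maximum coordinate length occurring in `S`. -/
noncomputable def ell (S : Set (W A n)) : ℕ :=
  sSup {m | ∃ z ∈ S, ∃ i : Fin n, (z i).length = m}

/-- An element of `n RI^fin_A`: an injective right ideal morphism of `nA*`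
whose domain code and image code are finite maximal joinless codes.
`toFun` is a total function whose values outside `Dom` are irrelevant. -/
structure RIMfin (A : Type*) (n : ℕ) where
  Dom : Set (W A n)
  toFun : W A n → W A n
  domC : Set (W A n)
  imC : Set (W A n)
  ideal : IsRightIdeal Dom
  morph : ∀ x ∈ Dom, ∀ w : W A n, toFun (cat x w) = cat (toFun x) w
  inj : Set.InjOn toFun Dom
  domC_gen : genIdeal domC = Dom
  imC_gen : genIdeal imC = toFun '' Dom
  domC_fin : domC.Finite
  domC_max : MaxJoinlessCode domC
  imC_fin : imC.Finite
  imC_max : MaxJoinlessCode imC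

/-- `ℓ(f) = max{ℓ(z) : z ∈ domC(f) ∪ imC(f)}`. -/
noncomputable def ellF (F : RIMfin A n) : ℕ := ell (F.domC ∪ F.imC)

/-- `G` extends `F` (as partial functions). -/
def Extends (F G : RIMfin A n) : Prop :=
  F.Dom ⊆ G.Dom ∧ ∀ x ∈ F.Dom, G.toFun x = F.toFun x

/-- `F` and `G` are equal as partial functions. -/
def EquivRIM (F G : RIMfin A n) : Prop :=
  F.Dom = G.Dom ∧ ∀ x ∈ F.Dom, F.toFun x = G.toFun x

/-- `G` is a maximal extension of `F` in `n RI^fin_A`. -/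
def MaxExtension (F G : RIMfin A n) : Prop :=
  Extends F G ∧ ∀ H : RIMfin A n, Extends G H → EquivRIM G H

/-! If some `p ∈ P` has `|p_i| < k_i`, restricting at `(p, i)` keeps `P` a maximal joinless code
with coordinate lengths bounded by `k`, and lowers `∑_{p ∈ P} (|A| + 1) ^ d(p)` with
`d(p) = ∑_i (k_i - |p_i|)`, because `p` is replaced by `|A|` tuples whose `d` is one smaller. Once
every element lies in the box, `P` is the whole box, since the box is joinless. Conversely,
restriction steps preserve joinlessness and reflect maximality, and the box is maximal. -/

theorem _root_.List.exists_length_eq_prefix_or_prefix {α : Type*} [Nonempty α] (s : List α)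
    (m : ℕ) : ∃ t : List α, t.length = m ∧ (s <+: t ∨ t <+: s) := by
  obtain ⟨a⟩ := ‹Nonempty α›
  refine ⟨s.take m ++ List.replicate (m - s.length) a, by simp; omega, ?_⟩
  rcases le_or_gt s.length m with hle | hlt
  · rw [List.take_of_length_le hle]
    exact .inl (List.prefix_append _ _)
  · rw [Nat.sub_eq_zero_of_le hlt.le, List.replicate_zero, List.append_nil]
    exact .inr (List.take_prefix _ _)

theorem _root_.List.exists_prefix_or_prefix_concat {α : Type*} [Nonempty α] {s t : List α}
    (h : s <+: t ∨ t <+: s) : ∃ a : α, s <+: t ++ [a] ∨ t ++ [a] <+: s := by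
  obtain ⟨a⟩ := ‹Nonempty α›
  rcases h with h | ⟨_ | ⟨b, r⟩, rfl⟩
  · exact ⟨a, .inl (h.trans (List.prefix_append _ _))⟩
  · exact ⟨a, .inl (by simp)⟩
  · exact ⟨b, .inr (by simp)⟩

theorem initLE_iff_forall_prefix {u v : W A n} : initLE u v ↔ ∀ i, u i <+: v i := by
  refine ⟨fun ⟨x, hx⟩ i => ⟨x i, by rw [hx]; rfl⟩, fun h => ⟨fun i => (v i).drop (u i).length, ?_⟩⟩
  funext i
  obtain ⟨t, ht⟩ := h i
  simp [cat, ← ht]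

theorem hasJoin_iff_forall_prefix_or_prefix {u v : W A n} :
    HasJoin u v ↔ ∀ i, u i <+: v i ∨ v i <+: u i := by
  simp only [initLE_iff_forall_prefix, HasJoin, isJoin]
  refine ⟨fun ⟨w, hu, hv, _⟩ i => List.prefix_or_prefix_of_prefix (hu i) (hv i), fun h => ?_⟩
  refine ⟨fun i => if (u i).length ≤ (v i).length then v i else u i,
    fun i => ?_, fun i => ?_, fun z hu hv i => ?_⟩ <;> dsimp only <;> split_ifs with hle
  · exact (h i).elim id fun h' => by rw [h'.eq_of_length_le hle]
  · exact List.prefix_rfl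
  · exact List.prefix_rfl
  · exact (h i).elim (fun h' => by rw [h'.eq_of_length_le (by omega)]) id
  · exact hv i
  · exact hu i

theorem HasJoin.symm {u v : W A n} (h : HasJoin u v) : HasJoin v u :=
  hasJoin_iff_forall_prefix_or_prefix.2 fun i => (hasJoin_iff_forall_prefix_or_prefix.1 h i).symm

theorem eq_of_hasJoin_of_length_eq {u v : W A n} (h : HasJoin u v)
    (hlen : ∀ i, (u i).length = (v i).length) : u = v :=
  funext fun i => (hasJoin_iff_forall_prefix_or_prefix.1 h i).elim
    (fun h' => h'.eq_of_length (hlen i)) fun h' => (h'.eq_of_length (hlen i).symm).symm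

theorem child_apply_self (v : W A n) (i : Fin n) (a : A) : child v i a i = v i ++ [a] :=
  Function.update_self _ _ _

theorem child_apply_of_ne (v : W A n) {i j : Fin n} (a : A) (h : j ≠ i) :
    child v i a j = v j :=
  Function.update_of_ne h _ _

theorem child_injective (v : W A n) (i : Fin n) : Function.Injective (child v i) := fun a b h => by
  simpa [child_apply_self] using congrFun h i

theorem HasJoin.of_child {u v : W A n} {i : Fin n} {a : A} (h : HasJoin u (child v i a)) :
    HasJoin u v := by
  rw [hasJoin_iff_forall_prefix_or_prefix] at h ⊢
  intro j
  rcases eq_or_ne j i with rfl | hj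
  · have hj := h j
    rw [child_apply_self] at hj
    exact hj.elim (fun h' => List.prefix_or_prefix_of_prefix h' (List.prefix_append _ _))
      fun h' => .inr ((List.prefix_append _ _).trans h')
  · simpa [child_apply_of_ne v a hj] using h j

theorem exists_hasJoin_child [Nonempty A] {u v : W A n} (h : HasJoin u v) (i : Fin n) :
    ∃ a : A, HasJoin u (child v i a) := by
  rw [hasJoin_iff_forall_prefix_or_prefix] at h
  obtain ⟨a, ha⟩ := List.exists_prefix_or_prefix_concat (h i)
  refine ⟨a, hasJoin_iff_forall_prefix_or_prefix.2 fun j => ?_⟩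
  rcases eq_or_ne j i with rfl | hj
  · rwa [child_apply_self]
  · rw [child_apply_of_ne v a hj]
    exact h j

theorem joinlessCode_box (k : Fin n → ℕ) : JoinlessCode (box A k) :=
  fun _ hu _ hv hne hj => hne (eq_of_hasJoin_of_length_eq hj fun i => (hu i).trans (hv i).symm)

theorem maxJoinlessCode_box [Nonempty A] (k : Fin n → ℕ) : MaxJoinlessCode (box A k) := by
  refine ⟨joinlessCode_box k, fun x => ?_⟩
  choose t hlen hpre using fun i => List.exists_length_eq_prefix_or_prefix (x i) (k i)
  exact ⟨t, hlen, hasJoin_iff_forall_prefix_or_prefix.2 hpre⟩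

theorem MaxJoinlessCode.eq_of_subset {P Q : Set (W A n)} (hP : MaxJoinlessCode P)
    (hQ : JoinlessCode Q) (hPQ : P ⊆ Q) : P = Q := by
  refine hPQ.antisymm fun q hq => ?_
  obtain ⟨p, hp, hj⟩ := hP.2 q
  by_contra hqP
  exact hQ q hq p (hPQ hp) (fun h => hqP (h ▸ hp)) hj

theorem mem_oneStep {P : Set (W A n)} {p : W A n} {i : Fin n} {w : W A n} :
    w ∈ oneStep P p i ↔ (w ∈ P ∧ w ≠ p) ∨ ∃ a : A, w = child p i a := by
  simp [oneStep]

theorem JoinlessCode.oneStep {P : Set (W A n)} (hP : JoinlessCode P) {p : W A n} (hp : p ∈ P)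
    (i : Fin n) : JoinlessCode (oneStep P p i) := by
  intro u hu v hv hne hj
  rcases mem_oneStep.1 hu with ⟨hu, hup⟩ | ⟨a, rfl⟩ <;>
    rcases mem_oneStep.1 hv with ⟨hv, hvp⟩ | ⟨b, rfl⟩
  · exact hP u hu v hv hne hj
  · exact hP u hu p hp hup hj.of_child
  · exact hP v hv p hp hvp hj.symm.of_child
  · refine hne (eq_of_hasJoin_of_length_eq hj fun j => ?_)
    rcases eq_or_ne j i with rfl | hj
    · simp [child_apply_self]
    · rw [child_apply_of_ne p a hj, child_apply_of_ne p b hj]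

theorem MaxJoinlessCode.of_oneStep {P : Set (W A n)} (hP : JoinlessCode P) {p : W A n}
    (hp : p ∈ P) {i : Fin n} (h : MaxJoinlessCode (oneStep P p i)) : MaxJoinlessCode P := by
  refine ⟨hP, fun x => ?_⟩
  obtain ⟨q, hq, hj⟩ := h.2 x
  rcases mem_oneStep.1 hq with ⟨hq, -⟩ | ⟨a, rfl⟩
  · exact ⟨q, hq, hj⟩
  · exact ⟨p, hp, hj.of_child⟩

theorem MaxJoinlessCode.oneStep [Nonempty A] {P : Set (W A n)} (hP : MaxJoinlessCode P)
    {p : W A n} (hp : p ∈ P) (i : Fin n) : MaxJoinlessCode (oneStep P p i) := by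
  refine ⟨hP.1.oneStep hp i, fun x => ?_⟩
  obtain ⟨q, hq, hj⟩ := hP.2 x
  rcases eq_or_ne q p with rfl | hqp
  · obtain ⟨a, ha⟩ := exists_hasJoin_child hj i
    exact ⟨child q i a, mem_oneStep.2 (.inr ⟨a, rfl⟩), ha⟩
  · exact ⟨q, mem_oneStep.2 (.inl ⟨hq, hqp⟩), hj⟩

theorem MaxJoinlessCode.of_reflTransGen_restrStep_box [Nonempty A] {P : Set (W A n)}
    {k : Fin n → ℕ} (h : Relation.ReflTransGen RestrStep P (box A k)) (hP : JoinlessCode P) :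
    MaxJoinlessCode P := by
  induction h using Relation.ReflTransGen.head_induction_on with
  | refl => exact maxJoinlessCode_box k
  | head hstep _ ih =>
    obtain ⟨p, hp, i, rfl⟩ := hstep
    exact of_oneStep hP hp (ih (hP.oneStep hp i))

def boxDeficit (k : Fin n → ℕ) (p : W A n) : ℕ := ∑ i, (k i - (p i).length)

theorem boxDeficit_child {k : Fin n → ℕ} {p : W A n} {i : Fin n} (a : A)
    (h : (p i).length < k i) : boxDeficit k (child p i a) + 1 = boxDeficit k p := by
  have hterm (j : Fin n) :
      k j - (child p i a j).length + (if j = i then 1 else 0) = k j - (p j).length := by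
    rcases eq_or_ne j i with rfl | hj
    · simp only [child_apply_self, List.length_append, List.length_singleton, if_true]
      omega
    · simp [child_apply_of_ne p a hj, hj]
  calc boxDeficit k (child p i a) + 1
      = ∑ j, (k j - (child p i a j).length + if j = i then 1 else 0) := by
        simp [boxDeficit, Finset.sum_add_distrib]
    _ = boxDeficit k p := Fintype.sum_congr _ _ hterm

section Finite

variable [Fintype A]

def boxWeight (k : Fin n → ℕ) (P : Finset (W A n)) : ℕ :=
  ∑ p ∈ P, (Fintype.card A + 1) ^ boxDeficit k p

variable [DecidableEq A]

theorem coe_oneStep_finset (P : Finset (W A n)) (p : W A n) (i : Fin n) :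
    oneStep (P : Set (W A n)) p i = ↑(P.erase p ∪ Finset.univ.image (child p i)) := by
  ext w
  simp [mem_oneStep, and_comm, eq_comm]

theorem boxWeight_restrict_lt {k : Fin n → ℕ} {P : Finset (W A n)} {p : W A n} (hp : p ∈ P)
    {i : Fin n} (h : (p i).length < k i) :
    boxWeight k (P.erase p ∪ Finset.univ.image (child p i)) < boxWeight k P := by
  set f : W A n → ℕ := fun q => (Fintype.card A + 1) ^ boxDeficit k q
  have hchildren : (∑ a, f (child p i a)) * (Fintype.card A + 1) = Fintype.card A * f p := by
    simp only [f, Finset.sum_mul, ← pow_succ, boxDeficit_child _ h, Finset.sum_const,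
      Finset.card_univ, smul_eq_mul]
  have hchildren_lt : ∑ a, f (child p i a) < f p :=
    Nat.lt_of_mul_lt_mul_right (a := Fintype.card A + 1) <| by
      rw [hchildren, mul_comm (f p)]
      exact Nat.mul_lt_mul_of_pos_right (Nat.lt_succ_self _) (pow_pos (Nat.succ_pos _) _)
  calc boxWeight k (P.erase p ∪ Finset.univ.image (child p i))
      ≤ ∑ q ∈ P.erase p, f q + ∑ q ∈ Finset.univ.image (child p i), f q := by
        rw [boxWeight, ← Finset.sum_union_inter]
        exact Nat.le_add_right _ _
    _ = ∑ q ∈ P.erase p, f q + ∑ a, f (child p i a) := by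
        rw [Finset.sum_image fun a _ b _ hab => child_injective p i hab]
    _ < ∑ q ∈ P.erase p, f q + f p := by gcongr
    _ = boxWeight k P := Finset.sum_erase_add _ _ hp

theorem length_le_of_mem_restrict {k : Fin n → ℕ} {P : Finset (W A n)}
    (hP : ∀ q ∈ P, ∀ j, (q j).length ≤ k j) {p : W A n} (hp : p ∈ P) {i : Fin n}
    (h : (p i).length < k i) :
    ∀ q ∈ P.erase p ∪ Finset.univ.image (child p i), ∀ j, (q j).length ≤ k j := by
  simp only [Finset.mem_union, Finset.mem_erase, Finset.mem_image, Finset.mem_univ, true_and]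
  rintro q (⟨-, hq⟩ | ⟨a, rfl⟩) j
  · exact hP q hq j
  rcases eq_or_ne j i with rfl | hj
  · simpa [child_apply_self] using h
  · simpa [child_apply_of_ne p a hj] using hP p hp j

theorem MaxJoinlessCode.reflTransGen_restrStep_box [Nonempty A] {k : Fin n → ℕ}
    (P : Finset (W A n)) (hP : MaxJoinlessCode (P : Set (W A n)))
    (hk : ∀ p ∈ P, ∀ i, (p i).length ≤ k i) :
    Relation.ReflTransGen RestrStep (P : Set (W A n)) (box A k) := by
  by_cases hbox : ∀ p ∈ P, ∀ i, (p i).length = k i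
  · rw [hP.eq_of_subset (joinlessCode_box k) fun p hp => hbox p hp]
  push Not at hbox
  obtain ⟨p, hp, i, hne⟩ := hbox
  have hlt : (p i).length < k i := (hk p hp i).lt_of_ne hne
  have hstep : RestrStep (P : Set (W A n)) ↑(P.erase p ∪ Finset.univ.image (child p i)) :=
    ⟨p, hp, i, (coe_oneStep_finset P p i).symm⟩
  have hmax := coe_oneStep_finset P p i ▸ hP.oneStep hp i
  exact .head hstep (reflTransGen_restrStep_box _ hmax (length_le_of_mem_restrict hk hp hlt))
termination_by boxWeight k P
decreasing_by exact boxWeight_restrict_lt hp hlt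

end Finite

theorem maxJoinless_iff_restricts_to_box_general {A : Type*} [Fintype A] [Nonempty A]
    {n : ℕ} (P : Set (W A n)) (hfin : P.Finite)
    (hjl : JoinlessCode P) (k : Fin n → ℕ)
    (hk : ∀ i : Fin n, IsGreatest ((fun v : W A n => (v i).length) '' P) (k i)) :
    MaxJoinlessCode P ↔ Relation.ReflTransGen RestrStep P (box A k) := by
  classical
  refine ⟨fun hmax => ?_, fun h => .of_reflTransGen_restrStep_box h hjl⟩
  rw [← hfin.coe_toFinset] at hmax ⊢
  exact hmax.reflTransGen_restrStep_box _ fun p hp i => (hk i).2 ⟨p, hfin.mem_toFinset.1 hp, rfl⟩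

/-- A finite joinless code `P` is maximal iff it can be transformed into the
box code `A^{k_1} × … × A^{k_n}`, where `k_i = max{|v_i| : v ∈ P}`, by a
finite sequence of one-step restrictions. -/
theorem maxJoinless_iff_restricts_to_box {A : Type*} [Fintype A] [Nonempty A]
    {n : ℕ} (hn : 1 ≤ n) (P : Set (W A n)) (hfin : P.Finite)
    (hjl : JoinlessCode P) (k : Fin n → ℕ)
    (hk : ∀ i : Fin n, IsGreatest ((fun v : W A n => (v i).length) '' P) (k i)) :
    MaxJoinlessCode P ↔ Relation.ReflTransGen RestrStep P (box A k) :=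
  maxJoinless_iff_restricts_to_box_general P hfin hjl k hk

end BrinThompson
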